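/- Let n ≥ 2 and let x = ⟨d,k,m⟩ and y = ⟨d',k',m'⟩ be nonzero elements of M_n. Then: (Case 1) xy = yx with xy ≠ 0 if and only if max(k, k'−d) = max(k', k−d') ≤ min(m, m'−d) = min(m', m−d'); and (Case 2) xy = yx = 0 if and only if max(k, k'−d) > min(m, m'−d) and max(k', k−d') > min(m', m−d'). -/
import Mathlib


open Matrix

/-- The n×n matrix ⟨d,k,m⟩: entry (i,j) (rows/columns numbered 1..n, here i.val+1, j.val+1)
equals 1 if k ≤ i ≤ m and j = i + d, and 0 otherwise. -/
def tripMat (n : ℕ) (d k m : ℤ) : Matrix (Fin n) (Fin n) ℕ :=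
  Matrix.of fun i j =>
    if k ≤ (i.val : ℤ) + 1 ∧ (i.val : ℤ) + 1 ≤ m ∧ (j.val : ℤ) + 1 = (i.val : ℤ) + 1 + d
    then 1 else 0

lemma tripMat_mul (n : ℕ) (d k m d' k' m' : ℤ) (hk' : 1 ≤ k') (hm' : m' ≤ (n : ℤ)) :
    tripMat n d k m * tripMat n d' k' m'
      = tripMat n (d + d') (max k (k' - d)) (min m (m' - d)) := by
  ext i j
  simp only [tripMat, Matrix.mul_apply, Matrix.of_apply]
  by_cases h : max k (k' - d) ≤ (i.val : ℤ) + 1 ∧ (i.val : ℤ) + 1 ≤ min m (m' - d) ∧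
      (j.val : ℤ) + 1 = (i.val : ℤ) + 1 + (d + d')
  · have hl2 : ((i.val : ℤ) + d).toNat < n := by omega
    have hLv : (((⟨((i.val : ℤ) + d).toNat, hl2⟩ : Fin n) : ℕ) : ℤ) = (i.val : ℤ) + d := by
      simp only [Fin.val_mk]; omega
    rw [if_pos h, Finset.sum_eq_single (⟨((i.val : ℤ) + d).toNat, hl2⟩ : Fin n)]
    · rw [hLv, if_pos ⟨by omega, by omega, by omega⟩, if_pos ⟨by omega, by omega, by omega⟩]
    · intro b _ hb
      by_cases hb1 : k ≤ (i.val : ℤ) + 1 ∧ (i.val : ℤ) + 1 ≤ m ∧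
          (b.val : ℤ) + 1 = (i.val : ℤ) + 1 + d
      · exfalso; apply hb; apply Fin.ext
        have : (b : ℕ) = (⟨((i.val : ℤ) + d).toNat, hl2⟩ : Fin n) := by omega
        exact this
      · rw [if_neg hb1, zero_mul]
    · intro hmem; exact absurd (Finset.mem_univ _) hmem
  · rw [if_neg h]
    apply Finset.sum_eq_zero
    intro l _
    by_cases hb1 : k ≤ (i.val : ℤ) + 1 ∧ (i.val : ℤ) + 1 ≤ m ∧
        (l.val : ℤ) + 1 = (i.val : ℤ) + 1 + d
    · rw [if_pos hb1, one_mul, if_neg]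
      intro hb2
      exact h ⟨by omega, by omega, by omega⟩
    · rw [if_neg hb1, zero_mul]

lemma tripMat_eq_zero (n : ℕ) (D K M : ℤ) (h : M < K) : tripMat n D K M = 0 := by
  ext i j
  simp only [tripMat, Matrix.of_apply, Matrix.zero_apply, ite_eq_right_iff]
  intro h'; omega

lemma tripMat_ne_zero (n : ℕ) (D K M : ℤ) (hKM : K ≤ M) (hK : 1 ≤ K) (hM : M ≤ (n : ℤ))
    (hKD : 1 ≤ K + D) (hMD : M + D ≤ (n : ℤ)) : tripMat n D K M ≠ 0 := by
  intro h
  have hi : (K - 1).toNat < n := by omega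
  have hj : (K - 1 + D).toNat < n := by omega
  have hvi : (((⟨(K - 1).toNat, hi⟩ : Fin n) : ℕ) : ℤ) = K - 1 := by
    simp only [Fin.val_mk]; omega
  have hvj : (((⟨(K - 1 + D).toNat, hj⟩ : Fin n) : ℕ) : ℤ) = K - 1 + D := by
    simp only [Fin.val_mk]; omega
  have := congrFun (congrFun h ⟨(K - 1).toNat, hi⟩) ⟨(K - 1 + D).toNat, hj⟩
  simp only [tripMat, Matrix.of_apply, Matrix.zero_apply] at this
  rw [hvi, hvj, if_pos ⟨by omega, by omega, by omega⟩] at this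
  exact one_ne_zero this

lemma tripMat_entry_iff (n : ℕ) (D K1 M1 K2 M2 x : ℤ)
    (h : tripMat n D K1 M1 = tripMat n D K2 M2)
    (hx1 : 1 ≤ x) (hx2 : x ≤ (n : ℤ)) (hxd1 : 1 ≤ x + D) (hxd2 : x + D ≤ (n : ℤ)) :
    (K1 ≤ x ∧ x ≤ M1) ↔ (K2 ≤ x ∧ x ≤ M2) := by
  have hi : (x - 1).toNat < n := by omega
  have hj : (x - 1 + D).toNat < n := by omega
  have hvi : (((⟨(x - 1).toNat, hi⟩ : Fin n) : ℕ) : ℤ) = x - 1 := by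
    simp only [Fin.val_mk]; omega
  have hvj : (((⟨(x - 1 + D).toNat, hj⟩ : Fin n) : ℕ) : ℤ) = x - 1 + D := by
    simp only [Fin.val_mk]; omega
  have := congrFun (congrFun h ⟨(x - 1).toNat, hi⟩) ⟨(x - 1 + D).toNat, hj⟩
  simp only [tripMat, Matrix.of_apply] at this
  rw [hvi, hvj] at this
  split_ifs at this <;> omega

/-- The monoid M_n, as a set of n×n matrices: the zero matrix together with all
matrices ⟨d,k,m⟩ with 1 - min(0,d) ≤ k ≤ m ≤ n - max(0,d). -/
def MSet (n : ℕ) : Set (Matrix (Fin n) (Fin n) ℕ) :=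
  {0} ∪ {x | ∃ d k m : ℤ,
    1 - min 0 d ≤ k ∧ k ≤ m ∧ m ≤ (n : ℤ) - max 0 d ∧ x = tripMat n d k m}

/-- commutation conditions for two nonzero elements of M_n. -/
theorem stmt_12 (n : ℕ) (hn : 2 ≤ n) (d k m d' k' m' : ℤ)
    (h1 : 1 - min 0 d ≤ k) (h2 : k ≤ m) (h3 : m ≤ (n : ℤ) - max 0 d)
    (h1' : 1 - min 0 d' ≤ k') (h2' : k' ≤ m') (h3' : m' ≤ (n : ℤ) - max 0 d') :
    ((tripMat n d k m * tripMat n d' k' m' = tripMat n d' k' m' * tripMat n d k m ∧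
        tripMat n d k m * tripMat n d' k' m' ≠ 0) ↔
      (max k (k' - d) = max k' (k - d') ∧ min m (m' - d) = min m' (m - d') ∧
        max k (k' - d) ≤ min m (m' - d))) ∧
    ((tripMat n d k m * tripMat n d' k' m' = 0 ∧
        tripMat n d' k' m' * tripMat n d k m = 0) ↔
      (min m (m' - d) < max k (k' - d) ∧ min m' (m - d') < max k' (k - d'))) := by
  have hxy : tripMat n d k m * tripMat n d' k' m'
      = tripMat n (d + d') (max k (k' - d)) (min m (m' - d)) :=
    tripMat_mul n d k m d' k' m' (by omega) (by omega)
  have hyx : tripMat n d' k' m' * tripMat n d k m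
      = tripMat n (d' + d) (max k' (k - d')) (min m' (m - d')) :=
    tripMat_mul n d' k' m' d k m (by omega) (by omega)
  constructor
  · constructor
    · rintro ⟨hcomm, hne⟩
      have hK1M1 : max k (k' - d) ≤ min m (m' - d) := by
        by_contra hc
        exact hne (by rw [hxy]; exact tripMat_eq_zero _ _ _ _ (by omega))
      have hne' : tripMat n d' k' m' * tripMat n d k m ≠ 0 := hcomm ▸ hne
      have hK2M2 : max k' (k - d') ≤ min m' (m - d') := by
        by_contra hc
        exact hne' (by rw [hyx]; exact tripMat_eq_zero _ _ _ _ (by omega))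
      have heq : tripMat n (d + d') (max k (k' - d)) (min m (m' - d))
          = tripMat n (d + d') (max k' (k - d')) (min m' (m - d')) := by
        rw [← hxy, hcomm, hyx, add_comm d' d]
      have e1 := tripMat_entry_iff n (d + d') _ _ _ _ (max k (k' - d)) heq
        (by omega) (by omega) (by omega) (by omega)
      have e2 := tripMat_entry_iff n (d + d') _ _ _ _ (min m (m' - d)) heq
        (by omega) (by omega) (by omega) (by omega)
      have e3 := tripMat_entry_iff n (d + d') _ _ _ _ (max k' (k - d')) heq
        (by omega) (by omega) (by omega) (by omega)
      have e4 := tripMat_entry_iff n (d + d') _ _ _ _ (min m' (m - d')) heq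
        (by omega) (by omega) (by omega) (by omega)
      exact ⟨by omega, by omega, hK1M1⟩
    · rintro ⟨e1, e2, hle⟩
      constructor
      · rw [hxy, hyx, add_comm d' d, e1, e2]
      · rw [hxy]
        exact tripMat_ne_zero n (d + d') _ _ hle (by omega) (by omega) (by omega) (by omega)
  · constructor
    · rintro ⟨hz1, hz2⟩
      rw [hxy] at hz1
      rw [hyx] at hz2
      constructor
      · by_contra hc
        exact tripMat_ne_zero n (d + d') _ _ (by omega) (by omega) (by omega) (by omega)
          (by omega) hz1
      · by_contra hc
        exact tripMat_ne_zero n (d' + d) _ _ (by omega) (by omega) (by omega) (by omega)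
          (by omega) hz2
    · rintro ⟨hlt1, hlt2⟩
      exact ⟨by rw [hxy]; exact tripMat_eq_zero _ _ _ _ hlt1,
        by rw [hyx]; exact tripMat_eq_zero _ _ _ _ hlt2⟩
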